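/- arXiv:2107.05705 — 3 statements merged into one kernel-verified Lean document; each statement's English description precedes it below -/
import Mathlib

section
/- Let P be a polynomial with complex coefficients, f(z) = e^{P(z)}, b_1, ..., b_k complex constants with b_k \ne 0, and A a nonzero complex number. If \sum_{j=1}^k b_j f^{(j)} = \sqrt{A}\, f identically (where \sqrt{A} \ne 0), then P has degree at most 1, and if P is non-constant then P(z) = cz + d for constants c \ne 0, d. -/
/-!
Writing `f = exp ∘ P`, every derivative has the form `f⁽ʲ⁾ = Qⱼ · f` with polynomials
`Q₀ = 1`, `Qⱼ₊₁ = Qⱼ' + Qⱼ P'`. Dividing the equation by `f` turns it into the polynomial identity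
`∑ bⱼ Qⱼ = √A`. If `deg P ≥ 2`, then `m := deg P' ≥ 1` and `Qⱼ` has degree `j m` with leading
coefficient `(lc P')ʲ`, so the left side has degree `k m > 0` with leading coefficient
`bₖ (lc P')ᵏ ≠ 0`, and cannot be constant.
-/

open Polynomial

namespace Polynomial

variable {R : Type*} [CommRing R]

noncomputable def iterDerivExpFactor (P : R[X]) : ℕ → R[X]
  | 0 => 1
  | j + 1 => derivative (iterDerivExpFactor P j) + iterDerivExpFactor P j * derivative P

theorem natDegree_iterDerivExpFactor_and_leadingCoeff [IsDomain R] {P : R[X]}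
    (hP : (derivative P).natDegree ≠ 0) (j : ℕ) :
    (iterDerivExpFactor P j).natDegree = j * (derivative P).natDegree ∧
      (iterDerivExpFactor P j).leadingCoeff = (derivative P).leadingCoeff ^ j := by
  induction j with
  | zero => simp [iterDerivExpFactor]
  | succ j ih =>
    obtain ⟨hdeg, hlc⟩ := ih
    set Q := iterDerivExpFactor P j
    have hP' : derivative P ≠ 0 := fun h => hP (by simp [h])
    have hQ : Q ≠ 0 := fun h => by
      simp only [h, leadingCoeff_zero] at hlc
      exact pow_ne_zero j (leadingCoeff_ne_zero.mpr hP') hlc.symm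
    have hmul : (Q * derivative P).natDegree = (j + 1) * (derivative P).natDegree := by
      rw [natDegree_mul hQ hP', hdeg]; ring
    have hlt : (derivative Q).natDegree < (Q * derivative P).natDegree := by
      have := hdeg ▸ (natDegree_derivative_le Q).trans (Nat.sub_le _ _)
      rw [hmul, add_one_mul]
      omega
    show (derivative Q + Q * derivative P).natDegree = _ ∧
      (derivative Q + Q * derivative P).leadingCoeff = _
    refine ⟨by rw [natDegree_add_eq_right_of_natDegree_lt hlt, hmul], ?_⟩
    rw [leadingCoeff_add_of_degree_lt (degree_lt_degree hlt), leadingCoeff_mul, hlc, pow_succ]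

theorem coeff_sum_C_mul_iterDerivExpFactor [IsDomain R] {P : R[X]}
    (hP : (derivative P).natDegree ≠ 0) (b : ℕ → R) {s : Finset ℕ} {k : ℕ} (hk : k ∈ s)
    (hs : ∀ j ∈ s, j ≤ k) :
    (∑ j ∈ s, C (b j) * iterDerivExpFactor P j).coeff (k * (derivative P).natDegree) =
      b k * (derivative P).leadingCoeff ^ k := by
  have hQ := natDegree_iterDerivExpFactor_and_leadingCoeff hP
  rw [finsetSum_coeff, Finset.sum_eq_single_of_mem k hk, coeff_C_mul, ← (hQ k).1,
    coeff_natDegree, (hQ k).2]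
  intro j hj hjk
  have hlt : j * (derivative P).natDegree < k * (derivative P).natDegree :=
    Nat.mul_lt_mul_of_pos_right (lt_of_le_of_ne (hs j hj) hjk) (Nat.pos_of_ne_zero hP)
  rw [coeff_C_mul, coeff_eq_zero_of_natDegree_lt ((hQ j).1 ▸ hlt), mul_zero]

theorem natDegree_derivative_eq_zero_of_sum_C_mul_iterDerivExpFactor_eq_C [IsDomain R]
    {P : R[X]} {b : ℕ → R} {k : ℕ} (hk : 1 ≤ k) (hbk : b k ≠ 0) {c : R}
    (h : ∑ j ∈ Finset.Icc 1 k, C (b j) * iterDerivExpFactor P j = C c) :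
    (derivative P).natDegree = 0 := by
  by_contra hP
  have hcoeff := coeff_sum_C_mul_iterDerivExpFactor hP b (Finset.mem_Icc.mpr ⟨hk, le_rfl⟩)
    fun j hj => (Finset.mem_Icc.mp hj).2
  rw [h, coeff_C, if_neg (Nat.mul_ne_zero (by omega) hP)] at hcoeff
  exact mul_ne_zero hbk (pow_ne_zero _ (leadingCoeff_ne_zero.mpr fun h' => hP (by simp [h'])))
    hcoeff.symm

end Polynomial

theorem iteratedDeriv_cexp_eval (P : ℂ[X]) (j : ℕ) :
    iteratedDeriv j (fun z => Complex.exp (P.eval z)) =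
      fun z => (iterDerivExpFactor P j).eval z * Complex.exp (P.eval z) := by
  induction j with
  | zero => simp [iterDerivExpFactor]
  | succ j ih =>
    funext z
    rw [iteratedDeriv_succ, ih]
    refine (((iterDerivExpFactor P j).hasDerivAt z).mul (P.hasDerivAt z).cexp).deriv.trans ?_
    simp only [iterDerivExpFactor, eval_add, eval_mul]
    ring

theorem sum_C_mul_iterDerivExpFactor_eq_C {P : ℂ[X]} {s : Finset ℕ} {b : ℕ → ℂ} {c : ℂ}
    (h : ∀ z, ∑ j ∈ s, b j * iteratedDeriv j (fun z => Complex.exp (P.eval z)) z =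
      c * Complex.exp (P.eval z)) :
    ∑ j ∈ s, C (b j) * iterDerivExpFactor P j = C c := by
  refine Polynomial.funext fun z => mul_right_cancel₀ (Complex.exp_ne_zero (P.eval z)) ?_
  simpa [iteratedDeriv_cexp_eval, eval_finsetSum, Finset.sum_mul, mul_assoc] using h z

theorem stmt_9_general (P : Polynomial ℂ) (f : ℂ → ℂ) (hf : ∀ z, f z = Complex.exp (P.eval z))
    (k : ℕ) (b : ℕ → ℂ) (hbk : b k ≠ 0) (sqrtA : ℂ) (hsqrtA : sqrtA ≠ 0)
    (heq : ∀ z, ∑ j ∈ Finset.Icc 1 k, b j * iteratedDeriv j f z = sqrtA * f z) :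
    P.natDegree ≤ 1 ∧
      (P.natDegree ≠ 0 → ∃ c d : ℂ, c ≠ 0 ∧ P = Polynomial.C c * Polynomial.X + Polynomial.C d) := by
  obtain rfl : f = fun z => Complex.exp (P.eval z) := funext hf
  have hk : 1 ≤ k := by
    by_contra hk
    simpa [show k = 0 by omega, hsqrtA] using heq 0
  have hdeg : P.natDegree ≤ 1 := by
    have := natDegree_derivative_eq_zero_of_sum_C_mul_iterDerivExpFactor_eq_C hk hbk
      (sum_C_mul_iterDerivExpFactor_eq_C heq)
    rw [natDegree_derivative] at this
    omega
  refine ⟨hdeg, fun hP => ⟨P.coeff 1, P.coeff 0, ?_, eq_X_add_C_of_natDegree_le_one hdeg⟩⟩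
  rw [show 1 = P.natDegree by omega, coeff_natDegree, leadingCoeff_ne_zero]
  rintro rfl
  simp at hP

theorem stmt_9 (P : Polynomial ℂ) (f : ℂ → ℂ) (hf : ∀ z, f z = Complex.exp (P.eval z))
    (k : ℕ) (b : ℕ → ℂ) (hbk : b k ≠ 0) (A sqrtA : ℂ) (hA : A ≠ 0)
    (hsq : sqrtA ^ 2 = A) (hsqrtA : sqrtA ≠ 0)
    (heq : ∀ z, ∑ j ∈ Finset.Icc 1 k, b j * iteratedDeriv j f z = sqrtA * f z) :
    P.natDegree ≤ 1 ∧
      (P.natDegree ≠ 0 → ∃ c d : ℂ, c ≠ 0 ∧ P = Polynomial.C c * Polynomial.X + Polynomial.C d) :=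
  stmt_9_general P f hf k b hbk sqrtA hsqrtA heq
end

section
/- Let f(z) = c_1 e^{cz} + c_2 e^{-cz} with c, c_1, c_2 nonzero complex numbers and c^2 \ne 1. Suppose 4 c^{2k} c_1 c_2 = a_1^2 (c^{2k} - 1) for an odd positive integer k and a nonzero complex number a_1, and set a_2 = -a_1. Then (f^{(k)}(z) - a_1)(f^{(k)}(z) - a_2) = c^{2k} (f(z) - a_1)(f(z) - a_2) for all z \in \mathbb{C}. -/
/-! Writing `E = exp (c z)`, so that `exp (-c z) = E⁻¹`, one has `f = c₁ E + c₂ E⁻¹` and, `k` being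
odd, `f⁽ᵏ⁾ = cᵏ (c₁ E - c₂ E⁻¹)`. Hence `(f⁽ᵏ⁾)² = c²ᵏ (f² - 4 c₁ c₂)`, and the relation between
`c₁ c₂` and `a₁` turns this into `(f⁽ᵏ⁾)² - a₁² = c²ᵏ (f² - a₁²)`. -/

open Complex

theorem iteratedDeriv_const_mul_cexp_add_const_mul_cexp_neg (n : ℕ) (c c₁ c₂ z : ℂ) :
    iteratedDeriv n (fun z => c₁ * exp (c * z) + c₂ * exp (-c * z)) z =
      c ^ n * c₁ * exp (c * z) + (-c) ^ n * c₂ * exp (-c * z) := by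
  rw [iteratedDeriv_fun_add (by fun_prop) (by fun_prop), iteratedDeriv_const_mul_field,
    iteratedDeriv_const_mul_field, iteratedDeriv_cexp_const_mul, iteratedDeriv_cexp_const_mul]
  ring

theorem mul_sub_mul_add_eq_of_mul_eq_one {R : Type*} [CommRing R] {u v : R} (huv : u * v = 1)
    {l c₁ c₂ a : R} (hrel : 4 * l ^ 2 * c₁ * c₂ = a ^ 2 * (l ^ 2 - 1)) :
    (l * (c₁ * u - c₂ * v) - a) * (l * (c₁ * u - c₂ * v) + a) =
      l ^ 2 * ((c₁ * u + c₂ * v - a) * (c₁ * u + c₂ * v + a)) := by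
  linear_combination (-4 * l ^ 2 * c₁ * c₂) * huv - hrel

theorem stmt_12_general (c c₁ c₂ a₁ a₂ : ℂ) (k : ℕ) (hodd : Odd k)
    (ha : a₂ = -a₁)
    (hrel : 4 * c ^ (2 * k) * c₁ * c₂ = a₁ ^ 2 * (c ^ (2 * k) - 1))
    (f : ℂ → ℂ)
    (hf : ∀ z, f z = c₁ * Complex.exp (c * z) + c₂ * Complex.exp (-c * z)) :
    ∀ z, (iteratedDeriv k f z - a₁) * (iteratedDeriv k f z - a₂) =
      c ^ (2 * k) * ((f z - a₁) * (f z - a₂)) := by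
  intro z
  have hderiv : iteratedDeriv k f z = c ^ k * (c₁ * exp (c * z) - c₂ * exp (-c * z)) := by
    rw [funext hf, iteratedDeriv_const_mul_cexp_add_const_mul_cexp_neg, hodd.neg_pow]
    ring
  have hexp : exp (c * z) * exp (-c * z) = 1 := by
    rw [← exp_add, neg_mul, add_neg_cancel, exp_zero]
  rw [pow_mul'] at hrel ⊢
  rw [hderiv, hf, ha, sub_neg_eq_add, sub_neg_eq_add]
  exact mul_sub_mul_add_eq_of_mul_eq_one hexp hrel

theorem stmt_12 (c c₁ c₂ a₁ a₂ : ℂ) (hc : c ≠ 0) (hc₁ : c₁ ≠ 0) (hc₂ : c₂ ≠ 0)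
    (hc2 : c ^ 2 ≠ 1) (k : ℕ) (hk : 0 < k) (hodd : Odd k) (ha₁ : a₁ ≠ 0)
    (ha : a₂ = -a₁)
    (hrel : 4 * c ^ (2 * k) * c₁ * c₂ = a₁ ^ 2 * (c ^ (2 * k) - 1))
    (f : ℂ → ℂ)
    (hf : ∀ z, f z = c₁ * Complex.exp (c * z) + c₂ * Complex.exp (-c * z)) :
    ∀ z, (iteratedDeriv k f z - a₁) * (iteratedDeriv k f z - a₂) =
      c ^ (2 * k) * ((f z - a₁) * (f z - a₂)) :=
  stmt_12_general c c₁ c₂ a₁ a₂ k hodd ha hrel f hf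
end

section
/- Let f and g be holomorphic functions on \mathbb{C}, a_1 \ne a_2 complex numbers, and h = \frac{(g-a_1)(g-a_2)}{(f-a_1)(f-a_2)} wherever defined. If z_0 is a zero of both (f-a_1)(f-a_2) and (g-a_1)(g-a_2) of the same multiplicity p \ge 2 with f(z_0) = g(z_0), and h extends holomorphically and non-vanishing at z_0, then z_0 is a zero of (f' h - g')(f' h + g') of multiplicity at least 2(p-1) \ge p. -/
/-!
Say `f z₀ = a₁`. Since `f - a₂` does not vanish at `z₀`, the order `p` of `(f - a₁)(f - a₂)`
is the order of `f - f z₀`, so `f'` vanishes to order `p - 1` at `z₀`; the same holds for `g'`.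
Each factor `f' h ∓ g'` therefore vanishes to order at least `p - 1`, and their product to
order at least `2(p - 1)`.
-/

section

variable {𝕜 : Type*} [NontriviallyNormedField 𝕜] {f u v h : 𝕜 → 𝕜} {a b z₀ : 𝕜}

lemma AnalyticAt.analyticOrderAt_mul_sub_eq_of_apply_eq (hf : AnalyticAt 𝕜 f z₀)
    (ha : f z₀ = a) (hb : f z₀ ≠ b) :
    analyticOrderAt (fun z => (f z - a) * (f z - b)) z₀ =
      analyticOrderAt (fun z => f z - f z₀) z₀ := by
  have hb₀ : analyticOrderAt (fun z => f z - b) z₀ = 0 :=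
    analyticOrderAt_eq_zero.mpr (.inr (sub_ne_zero.mpr hb))
  subst ha
  exact (analyticOrderAt_mul (f := fun z => f z - f z₀) (g := fun z => f z - b)
    (hf.sub analyticAt_const) (hf.sub analyticAt_const)).trans (by rw [hb₀, add_zero])

lemma AnalyticAt.analyticOrderAt_mul_sub_le (hf : AnalyticAt 𝕜 f z₀) (hab : a ≠ b) :
    analyticOrderAt (fun z => (f z - a) * (f z - b)) z₀ ≤
      analyticOrderAt (fun z => f z - f z₀) z₀ := by
  by_cases ha : f z₀ = a
  · exact (hf.analyticOrderAt_mul_sub_eq_of_apply_eq ha (ha ▸ hab)).le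
  by_cases hb : f z₀ = b
  · simp_rw [mul_comm (f _ - a)]
    exact (hf.analyticOrderAt_mul_sub_eq_of_apply_eq hb (hb ▸ hab.symm)).le
  · have : (f z₀ - a) * (f z₀ - b) ≠ 0 := mul_ne_zero (sub_ne_zero.mpr ha) (sub_ne_zero.mpr hb)
    rw [analyticOrderAt_eq_zero (f := fun z => (f z - a) * (f z - b)) |>.mpr (.inr this)]
    exact zero_le

lemma AnalyticAt.analyticOrderAt_mul_sub_sub_one_le_deriv [CompleteSpace 𝕜] [CharZero 𝕜]
    (hf : AnalyticAt 𝕜 f z₀) (hab : a ≠ b) :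
    analyticOrderAt (fun z => (f z - a) * (f z - b)) z₀ - 1 ≤ analyticOrderAt (deriv f) z₀ := by
  rw [tsub_le_iff_right, hf.analyticOrderAt_deriv_add_one]
  exact hf.analyticOrderAt_mul_sub_le hab

lemma le_analyticOrderAt_mul_sub_mul_add {n : ℕ∞} (hu : AnalyticAt 𝕜 u z₀)
    (hv : AnalyticAt 𝕜 v z₀) (hh : AnalyticAt 𝕜 h z₀)
    (hun : n ≤ analyticOrderAt u z₀) (hvn : n ≤ analyticOrderAt v z₀) :
    2 * n ≤ analyticOrderAt (fun z => (u z * h z - v z) * (u z * h z + v z)) z₀ := by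
  have huh : n ≤ analyticOrderAt (u * h) z₀ := by
    rw [analyticOrderAt_mul hu hh]
    exact le_add_right hun
  have hsub : n ≤ analyticOrderAt (u * h - v) z₀ :=
    (le_min huh hvn).trans le_analyticOrderAt_sub
  have hadd : n ≤ analyticOrderAt (u * h + v) z₀ :=
    (le_min huh hvn).trans le_analyticOrderAt_add
  calc 2 * n = n + n := two_mul n
    _ ≤ analyticOrderAt (u * h - v) z₀ + analyticOrderAt (u * h + v) z₀ := add_le_add hsub hadd
    _ = analyticOrderAt ((u * h - v) * (u * h + v)) z₀ :=
      (analyticOrderAt_mul ((hu.mul hh).sub hv) ((hu.mul hh).add hv)).symm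

end

theorem stmt_14_general (f g h : ℂ → ℂ) (a₁ a₂ : ℂ) (ha : a₁ ≠ a₂) (z₀ : ℂ)
    (hf : Differentiable ℂ f) (hg : Differentiable ℂ g)
    (hh : AnalyticAt ℂ h z₀)
    (p : ℕ)
    (hordF : analyticOrderAt (fun z => (f z - a₁) * (f z - a₂)) z₀ = (p : ℕ∞)) (hordG : analyticOrderAt (fun z => (g z - a₁) * (g z - a₂)) z₀ = (p : ℕ∞)) :
    ((2 * (p - 1) : ℕ) : ℕ∞) ≤ analyticOrderAt
      (fun z => (deriv f z * h z - deriv g z) * (deriv f z * h z + deriv g z)) z₀ := by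
  have hf' := (hf.analyticAt z₀).analyticOrderAt_mul_sub_sub_one_le_deriv ha
  have hg' := (hg.analyticAt z₀).analyticOrderAt_mul_sub_sub_one_le_deriv ha
  rw [hordF] at hf'
  rw [hordG] at hg'
  rw [Nat.cast_mul, ENat.natCast_sub]
  exact le_analyticOrderAt_mul_sub_mul_add (hf.analyticAt z₀).deriv (hg.analyticAt z₀).deriv hh
    hf' hg'

theorem stmt_14 (f g h : ℂ → ℂ) (a₁ a₂ : ℂ) (ha : a₁ ≠ a₂) (z₀ : ℂ)
    (hf : Differentiable ℂ f) (hg : Differentiable ℂ g)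
    (hFa : AnalyticAt ℂ (fun z => (f z - a₁) * (f z - a₂)) z₀)
    (hGa : AnalyticAt ℂ (fun z => (g z - a₁) * (g z - a₂)) z₀)
    (hh : AnalyticAt ℂ h z₀) (hh0 : h z₀ ≠ 0)
    (hrel : ∀ᶠ z in nhds z₀,
      (g z - a₁) * (g z - a₂) = h z * ((f z - a₁) * (f z - a₂)))
    (p : ℕ) (hp : 2 ≤ p)
    (hordF : analyticOrderAt (fun z => (f z - a₁) * (f z - a₂)) z₀ = (p : ℕ∞)) (hordG : analyticOrderAt (fun z => (g z - a₁) * (g z - a₂)) z₀ = (p : ℕ∞))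
    (hfg : f z₀ = g z₀)
    (hΦ : AnalyticAt ℂ
      (fun z => (deriv f z * h z - deriv g z) * (deriv f z * h z + deriv g z)) z₀) :
    ((2 * (p - 1) : ℕ) : ℕ∞) ≤ analyticOrderAt
      (fun z => (deriv f z * h z - deriv g z) * (deriv f z * h z + deriv g z)) z₀ :=
  stmt_14_general f g h a₁ a₂ ha z₀ hf hg hh p hordF hordG
end
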